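/- Let φ(t,λ) be the solution on [0,a₁] of −y'' + q(t)y = λ y with initial conditions y(0) = 1, y'(0) = h, where q is continuous and real-valued. Then for |λ| → ∞, φ(t,λ) = cos(√λ t) + (h/√λ) sin(√λ t) + O((1/√λ) exp(|τ| t)) uniformly for t ∈ [0,a₁], where τ = Im √λ. -/

import Mathlib

/-!
Variation of constants turns the equation into the Volterra equation
`φ t = cos (√λ t) + h / √λ · sin (√λ t) + (1/√λ) ∫₀ᵗ sin (√λ (t - ξ)) q ξ φ ξ dξ`.
Since `‖sin z‖, ‖cos z‖ ≤ exp |Im z|`, evaluating it where `‖φ t‖ e^{-τ t}` is maximal gives the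
a priori bound `‖φ t‖ ≤ 2 (1 + |h|) e^{τ t}` as soon as `|√λ| ≥ 2 ‖q‖∞ a₁`; fed back into the
integral, this bounds the integral term by `O(e^{τ t} / |√λ|)`.
-/

open Set Complex

section IccDerivatives

variable {E : Type*} [NormedAddCommGroup E] [NormedSpace ℝ E] {f : ℝ → E} {a b x : ℝ}

theorem hasDerivAt_derivWithin_Icc (hf : ContDiffOn ℝ 1 f (Icc a b)) (hx : x ∈ Ioo a b) :
    HasDerivAt f (derivWithin f (Icc a b) x) x := by
  have hnhds : Icc a b ∈ nhds x := Icc_mem_nhds hx.1 hx.2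
  rw [derivWithin_of_mem_nhds hnhds]
  exact ((hf.differentiableOn one_ne_zero x (Ioo_subset_Icc_self hx)).differentiableAt
    hnhds).hasDerivAt

theorem derivWithin_Icc_of_mem_Ioo (hx : x ∈ Ioo a b) : derivWithin f (Icc a b) x = deriv f x :=
  derivWithin_of_mem_nhds (Icc_mem_nhds hx.1 hx.2)

theorem hasDerivAt_derivWithin_Icc_deriv_deriv (hab : a < b) (hf : ContDiffOn ℝ 2 f (Icc a b))
    (hx : x ∈ Ioo a b) : HasDerivAt (derivWithin f (Icc a b)) (deriv (deriv f) x) x := by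
  have hf' : ContDiffOn ℝ 1 (derivWithin f (Icc a b)) (Icc a b) :=
    hf.derivWithin (uniqueDiffOn_Icc hab) (by norm_num)
  have hnear : derivWithin f (Icc a b) =ᶠ[nhds x] deriv f :=
    Filter.eventually_of_mem (isOpen_Ioo.mem_nhds hx) fun y hy => derivWithin_Icc_of_mem_Ioo hy
  have h := hasDerivAt_derivWithin_Icc hf' hx
  rwa [derivWithin_Icc_of_mem_Ioo hx, hnear.deriv_eq] at h

theorem derivWithin_Icc_left_eq_deriv (hab : a < b) (hf : ContDiffOn ℝ 1 f (Icc a b))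
    (hcont : ContinuousAt (deriv f) a) : derivWithin f (Icc a b) a = deriv f a := by
  have : (nhdsWithin a (Ioo a b)).NeBot := left_nhdsWithin_Ioo_neBot hab
  have ha : a ∈ Icc a b := left_mem_Icc.2 hab.le
  have hwithin : Filter.Tendsto (derivWithin f (Icc a b)) (nhdsWithin a (Ioo a b))
      (nhds (derivWithin f (Icc a b) a)) :=
    ((hf.continuousOn_derivWithin (uniqueDiffOn_Icc hab) le_rfl) a ha).mono Ioo_subset_Icc_self
  refine tendsto_nhds_unique (hwithin.congr' ?_) hcont.continuousWithinAt
  exact Filter.eventually_of_mem self_mem_nhdsWithin fun y hy => derivWithin_Icc_of_mem_Ioo hy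

end IccDerivatives

namespace Complex

theorem norm_exp_le_exp_of_abs_re_le {w : ℂ} {r : ℝ} (hw : |w.re| ≤ r) : ‖exp w‖ ≤ Real.exp r := by
  rw [norm_exp]
  exact Real.exp_le_exp.2 ((le_abs_self _).trans hw)

theorem norm_cos_le_exp_abs_im (z : ℂ) : ‖cos z‖ ≤ Real.exp |z.im| :=
  calc ‖cos z‖ ≤ (‖exp (z * I)‖ + ‖exp (-z * I)‖) / 2 := by
        rw [cos, norm_div, Complex.norm_ofNat]; gcongr; exact norm_add_le _ _
    _ ≤ (Real.exp |z.im| + Real.exp |z.im|) / 2 := by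
        gcongr <;> exact norm_exp_le_exp_of_abs_re_le (by simp)
    _ = Real.exp |z.im| := by ring

theorem norm_sin_le_exp_abs_im (z : ℂ) : ‖sin z‖ ≤ Real.exp |z.im| :=
  calc ‖sin z‖ ≤ (‖exp (-z * I)‖ + ‖exp (z * I)‖) / 2 := by
        rw [sin, norm_div, norm_mul, norm_I, mul_one, Complex.norm_ofNat]
        gcongr; exact norm_sub_le _ _
    _ ≤ (Real.exp |z.im| + Real.exp |z.im|) / 2 := by
        gcongr <;> exact norm_exp_le_exp_of_abs_re_le (by simp)
    _ = Real.exp |z.im| := by ring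

theorem abs_im_mul_ofReal {s : ℂ} {t : ℝ} (ht : 0 ≤ t) : |(s * t).im| = |s.im| * t := by
  rw [im_mul_ofReal, abs_mul, abs_of_nonneg ht]

end Complex

noncomputable def volterraTerm (s : ℂ) (q y : ℝ → ℂ) (t : ℝ) : ℂ :=
  ∫ ξ in (0 : ℝ)..t, sin (s * (t - ξ)) * q ξ * y ξ / s

theorem eq_volterra_of_hasDerivAt {y y' q : ℝ → ℂ} {s : ℂ} {t : ℝ} (hs : s ≠ 0) (ht : 0 ≤ t)
    (hy : ContinuousOn y (Icc 0 t)) (hy' : ContinuousOn y' (Icc 0 t))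
    (hq : ContinuousOn q (Icc 0 t))
    (hderiv : ∀ x ∈ Ioo 0 t, HasDerivAt y (y' x) x)
    (hderiv' : ∀ x ∈ Ioo 0 t, HasDerivAt y' ((q x - s ^ 2) * y x) x) :
    y t = cos (s * t) * y 0 + y' 0 / s * sin (s * t) + volterraTerm s q y t := by
  have hinner : ∀ x : ℝ, HasDerivAt (fun ξ : ℝ => s * (t - ξ)) (-s) x := fun x => by
    simpa using (((hasDerivAt_id (x : ℂ)).const_sub (t : ℂ)).const_mul s).comp_ofReal
  have hsin : ∀ x : ℝ, HasDerivAt (fun ξ : ℝ => sin (s * (t - ξ))) (cos (s * (t - x)) * -s) x :=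
    fun x => (hasDerivAt_sin _).comp x (hinner x)
  have hcos : ∀ x : ℝ, HasDerivAt (fun ξ : ℝ => cos (s * (t - ξ))) (-sin (s * (t - x)) * -s) x :=
    fun x => (hasDerivAt_cos _).comp x (hinner x)
  have htrig : Continuous (fun ξ : ℝ => s * (t - ξ)) := by fun_prop
  -- `W` is the Wronskian of `y` and `ξ ↦ sin (s (t - ξ)) / s`,
  -- so `W' = (y'' + s² y) sin (s (t - ξ)) / s`.
  set W : ℝ → ℂ := fun ξ => y' ξ * sin (s * (t - ξ)) / s + y ξ * cos (s * (t - ξ))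
  have hW : ContinuousOn W (Icc 0 t) :=
    ((hy'.mul (continuous_sin.comp htrig).continuousOn).div_const s).add
      (hy.mul (continuous_cos.comp htrig).continuousOn)
  have hW' : ∀ x ∈ Ioo 0 t, HasDerivAt W (sin (s * (t - x)) * q x * y x / s) x := by
    intro x hx
    refine ((((hderiv' x hx).mul (hsin x)).div_const s).add
      ((hderiv x hx).mul (hcos x))).congr_deriv ?_
    field_simp
    ring
  have hint : IntervalIntegrable (fun ξ : ℝ => sin (s * (t - ξ)) * q ξ * y ξ / s)
      MeasureTheory.volume 0 t := by
    refine ContinuousOn.intervalIntegrable ?_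
    rw [uIcc_of_le ht]
    exact (((continuous_sin.comp htrig).continuousOn.mul hq).mul hy).div_const s
  have hFTC := intervalIntegral.integral_eq_sub_of_hasDeriv_right_of_le ht hW
    (fun x hx => (hW' x hx).hasDerivWithinAt) hint
  rw [volterraTerm, hFTC]
  simp only [W, sub_self, mul_zero, sin_zero, cos_zero, Complex.ofReal_zero, sub_zero]
  ring

theorem norm_cos_add_div_mul_sin_le {s c : ℂ} {t : ℝ} (hs : 1 ≤ ‖s‖) (ht : 0 ≤ t) :
    ‖cos (s * t) + c / s * sin (s * t)‖ ≤ (1 + ‖c‖) * Real.exp (|s.im| * t) := by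
  have hcos := norm_cos_le_exp_abs_im (s * t)
  have hsin := norm_sin_le_exp_abs_im (s * t)
  have hcs : ‖c / s‖ ≤ ‖c‖ := by rw [norm_div]; exact div_le_self (norm_nonneg c) hs
  rw [abs_im_mul_ofReal ht] at hcos hsin
  calc ‖cos (s * t) + c / s * sin (s * t)‖ ≤ ‖cos (s * t)‖ + ‖c / s‖ * ‖sin (s * t)‖ := by
        rw [← norm_mul]; exact norm_add_le _ _
    _ ≤ Real.exp (|s.im| * t) + ‖c‖ * Real.exp (|s.im| * t) := by gcongr
    _ = (1 + ‖c‖) * Real.exp (|s.im| * t) := by ring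

theorem norm_volterraTerm_le {s : ℂ} {q y : ℝ → ℂ} {t Q Y : ℝ} (ht : 0 ≤ t)
    (hq : ∀ x ∈ Icc 0 t, ‖q x‖ ≤ Q) (hy : ∀ x ∈ Icc 0 t, ‖y x‖ ≤ Y * Real.exp (|s.im| * x)) :
    ‖volterraTerm s q y t‖ ≤ Q * Y * t / ‖s‖ * Real.exp (|s.im| * t) := by
  have hQ : 0 ≤ Q := (norm_nonneg _).trans (hq 0 (left_mem_Icc.2 ht))
  have hbound : ∀ x ∈ uIoc (0 : ℝ) t,
      ‖sin (s * (t - x)) * q x * y x / s‖ ≤ Q * Y * Real.exp (|s.im| * t) / ‖s‖ := by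
    intro x hx
    rw [uIoc_of_le ht] at hx
    have hx' : x ∈ Icc 0 t := Ioc_subset_Icc_self hx
    have hsin : ‖sin (s * (t - x))‖ ≤ Real.exp (|s.im| * (t - x)) := by
      have := norm_sin_le_exp_abs_im (s * ↑(t - x))
      rwa [abs_im_mul_ofReal (sub_nonneg.2 hx.2), ofReal_sub] at this
    have hexp : Real.exp (|s.im| * (t - x)) * Real.exp (|s.im| * x) = Real.exp (|s.im| * t) := by
      rw [← Real.exp_add]; ring_nf
    rw [norm_div, norm_mul, norm_mul]
    refine div_le_div_of_nonneg_right ?_ (norm_nonneg s)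
    calc ‖sin (s * (t - x))‖ * ‖q x‖ * ‖y x‖
        ≤ Real.exp (|s.im| * (t - x)) * Q * (Y * Real.exp (|s.im| * x)) := by
          gcongr
          exacts [hq x hx', hy x hx']
      _ = Q * Y * Real.exp (|s.im| * t) := by rw [← hexp]; ring
  calc ‖volterraTerm s q y t‖ ≤ Q * Y * Real.exp (|s.im| * t) / ‖s‖ * |t - 0| :=
        intervalIntegral.norm_integral_le_of_norm_le_const hbound
    _ = Q * Y * t / ‖s‖ * Real.exp (|s.im| * t) := by rw [sub_zero, abs_of_nonneg ht]; ring

theorem eq_volterra_of_ode {y q : ℝ → ℂ} {a : ℝ} {s c : ℂ} (ha : 0 < a) (hs : s ≠ 0)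
    (hy : ContDiffOn ℝ 2 y (Icc 0 a)) (hq : ContinuousOn q (Icc 0 a))
    (hode : ∀ t ∈ Icc 0 a, -(deriv (deriv y) t) + q t * y t = s ^ 2 * y t)
    (hq0 : q 0 ≠ s ^ 2) (hy0 : y 0 = 1) (hy'0 : deriv y 0 = c) :
    ∀ t ∈ Icc 0 a, y t = cos (s * t) + c / s * sin (s * t) + volterraTerm s q y t := by
  have hy1 : ContDiffOn ℝ 1 y (Icc 0 a) := hy.of_le (by norm_num)
  have hy'' : ∀ x ∈ Ioo 0 a, HasDerivAt (derivWithin y (Icc 0 a)) ((q x - s ^ 2) * y x) x :=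
    fun x hx => (hasDerivAt_derivWithin_Icc_deriv_deriv ha hy hx).congr_deriv
      (by linear_combination -hode x (Ioo_subset_Icc_self hx))
  -- `deriv y 0` is a two-sided derivative at the endpoint; it is the one-sided one only because the
  -- equation forces `deriv (deriv y) 0 ≠ 0`, so that `deriv y` is differentiable at `0`.
  have hdd0 : deriv (deriv y) 0 ≠ 0 := fun h0 => hq0 <| by
    simpa [h0, hy0] using hode 0 (left_mem_Icc.2 ha.le)
  have hy'0' : derivWithin y (Icc 0 a) 0 = c := by
    rw [derivWithin_Icc_left_eq_deriv ha hy1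
      (differentiableAt_of_deriv_ne_zero hdd0).continuousAt, hy'0]
  intro t ht
  have hsub : Icc 0 t ⊆ Icc 0 a := Icc_subset_Icc_right ht.2
  have hsub' : Ioo 0 t ⊆ Ioo 0 a := Ioo_subset_Ioo_right ht.2
  have h := eq_volterra_of_hasDerivAt hs ht.1 (hy.continuousOn.mono hsub)
    ((hy1.continuousOn_derivWithin (uniqueDiffOn_Icc ha) le_rfl).mono hsub) (hq.mono hsub)
    (fun x hx => hasDerivAt_derivWithin_Icc hy1 (hsub' hx)) (fun x hx => hy'' x (hsub' hx))
  rwa [hy0, hy'0', mul_one] at h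

section VolterraEstimate

variable {a Q : ℝ} {s c : ℂ} {q y : ℝ → ℂ}

theorem norm_le_of_eq_volterra (ha : 0 ≤ a) (hy : ContinuousOn y (Icc 0 a))
    (hq : ∀ x ∈ Icc 0 a, ‖q x‖ ≤ Q) (hs : 1 ≤ ‖s‖) (hsQ : 2 * Q * a ≤ ‖s‖)
    (hvol : ∀ t ∈ Icc 0 a, y t = cos (s * t) + c / s * sin (s * t) + volterraTerm s q y t) :
    ∀ t ∈ Icc 0 a, ‖y t‖ ≤ 2 * (1 + ‖c‖) * Real.exp (|s.im| * t) := by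
  have hQ : 0 ≤ Q := (norm_nonneg _).trans (hq 0 (left_mem_Icc.2 ha))
  -- `Y` is the maximum of `‖y t‖ e^{-|Im s| t}` on `[0, a]`; the Volterra equation at a maximiser
  -- gives `Y ≤ (1 + ‖c‖) + Y / 2`.
  obtain ⟨t₀, ht₀, hmax⟩ := isCompact_Icc.exists_isMaxOn (nonempty_Icc.2 ha)
    (hy.norm.div (Real.continuous_exp.comp (continuous_const.mul continuous_id)).continuousOn
      fun t _ => (Real.exp_pos _).ne')
  set Y := ‖y t₀‖ / Real.exp (|s.im| * t₀)
  have hY : ∀ t ∈ Icc 0 a, ‖y t‖ ≤ Y * Real.exp (|s.im| * t) := fun t ht =>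
    (div_le_iff₀ (Real.exp_pos _)).1 (hmax ht)
  have hY0 : 0 ≤ Y := by positivity
  have hsub : Icc 0 t₀ ⊆ Icc 0 a := Icc_subset_Icc_right ht₀.2
  have hsmall : Q * Y * t₀ / ‖s‖ ≤ Y / 2 := by
    rw [div_le_iff₀ (zero_lt_one.trans_le hs)]
    nlinarith [mul_le_mul_of_nonneg_left ht₀.2 (mul_nonneg hQ hY0)]
  have hYt₀ : Y * Real.exp (|s.im| * t₀) ≤ (1 + ‖c‖ + Y / 2) * Real.exp (|s.im| * t₀) :=
    calc Y * Real.exp (|s.im| * t₀) = ‖y t₀‖ := div_mul_cancel₀ _ (Real.exp_pos _).ne'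
      _ ≤ (1 + ‖c‖) * Real.exp (|s.im| * t₀) + Q * Y * t₀ / ‖s‖ * Real.exp (|s.im| * t₀) := by
          rw [hvol t₀ ht₀]
          refine (norm_add_le _ _).trans (add_le_add (norm_cos_add_div_mul_sin_le hs ht₀.1) ?_)
          exact norm_volterraTerm_le ht₀.1 (fun x hx => hq x (hsub hx))
            (fun x hx => hY x (hsub hx))
      _ ≤ (1 + ‖c‖ + Y / 2) * Real.exp (|s.im| * t₀) := by
          nlinarith [mul_le_mul_of_nonneg_right hsmall (Real.exp_pos (|s.im| * t₀)).le]
  have hYc : Y ≤ 2 * (1 + ‖c‖) := by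
    linarith [le_of_mul_le_mul_right hYt₀ (Real.exp_pos _)]
  intro t ht
  exact (hY t ht).trans (by gcongr)

theorem norm_sub_cos_add_div_mul_sin_le_of_eq_volterra (ha : 0 ≤ a)
    (hy : ContinuousOn y (Icc 0 a)) (hq : ∀ x ∈ Icc 0 a, ‖q x‖ ≤ Q) (hs : 1 ≤ ‖s‖)
    (hsQ : 2 * Q * a ≤ ‖s‖)
    (hvol : ∀ t ∈ Icc 0 a, y t = cos (s * t) + c / s * sin (s * t) + volterraTerm s q y t) :
    ∀ t ∈ Icc 0 a, ‖y t - (cos (s * t) + c / s * sin (s * t))‖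
      ≤ 2 * (1 + ‖c‖) * Q * a / ‖s‖ * Real.exp (|s.im| * t) := by
  intro t ht
  have hsub : Icc 0 t ⊆ Icc 0 a := Icc_subset_Icc_right ht.2
  have hQ : 0 ≤ Q := (norm_nonneg _).trans (hq 0 (left_mem_Icc.2 ha))
  calc ‖y t - (cos (s * t) + c / s * sin (s * t))‖ = ‖volterraTerm s q y t‖ := by
        rw [hvol t ht, add_sub_cancel_left]
    _ ≤ Q * (2 * (1 + ‖c‖)) * t / ‖s‖ * Real.exp (|s.im| * t) :=
        norm_volterraTerm_le ht.1 (fun x hx => hq x (hsub hx))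
          (fun x hx => norm_le_of_eq_volterra ha hy hq hs hsQ hvol x (hsub hx))
    _ ≤ Q * (2 * (1 + ‖c‖)) * a / ‖s‖ * Real.exp (|s.im| * t) := by gcongr; exact ht.2
    _ = 2 * (1 + ‖c‖) * Q * a / ‖s‖ * Real.exp (|s.im| * t) := by ring

end VolterraEstimate

/-- asymptotics of the solution φ(t,λ) of −y'' + q y = λ y, y(0)=1, y'(0)=h:
φ(t,λ) = cos(√λ t) + (h/√λ) sin(√λ t) + O((1/√λ) exp(|Im √λ| t)) uniformly on [0,a₁]. -/
theorem statement1 (a₁ : ℝ) (ha₁ : 0 < a₁) (q : ℝ → ℝ) (hq : ContinuousOn q (Icc 0 a₁))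
    (h : ℝ) (φ : ℂ → ℝ → ℂ)
    (hφsmooth : ∀ lam : ℂ, ContDiffOn ℝ 2 (φ lam) (Icc 0 a₁))
    (hφode : ∀ lam : ℂ, ∀ t ∈ Icc 0 a₁,
      -(deriv (deriv (φ lam)) t) + (q t : ℂ) * φ lam t = lam * φ lam t)
    (hφ0 : ∀ lam : ℂ, φ lam 0 = 1)
    (hφ'0 : ∀ lam : ℂ, deriv (φ lam) 0 = (h : ℂ)) :
    ∃ C > 0, ∃ R > 0, ∀ lam : ℂ, R ≤ ‖lam‖ → ∀ t ∈ Icc 0 a₁,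
      ‖φ lam t - (Complex.cos (lam ^ (1/2 : ℂ) * t)
        + ((h : ℂ) / lam ^ (1/2 : ℂ)) * Complex.sin (lam ^ (1/2 : ℂ) * t))‖
      ≤ C / ‖lam ^ (1/2 : ℂ)‖ * Real.exp (|(lam ^ (1/2 : ℂ)).im| * t) := by
  obtain ⟨Q, hQ⟩ := isCompact_Icc.exists_bound_of_continuousOn hq
  have hQc : ∀ x ∈ Icc 0 a₁, ‖(q x : ℂ)‖ ≤ Q := by simpa only [norm_real] using hQ
  have hQ0 : 0 ≤ Q := (norm_nonneg _).trans (hQ 0 (left_mem_Icc.2 ha₁.le))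
  refine ⟨2 * (1 + |h|) * Q * a₁ + 1, by positivity, (1 + Q + 2 * Q * a₁) ^ 2, by positivity,
    fun lam hlam t ht => ?_⟩
  set s := lam ^ (1/2 : ℂ)
  have hss : s ^ 2 = lam := by
    rw [show s = lam ^ (2⁻¹ : ℂ) by simp [s]]
    exact_mod_cast cpow_nat_inv_pow lam two_ne_zero
  have hsm : 1 + Q + 2 * Q * a₁ ≤ ‖s‖ := by
    rwa [← hss, norm_pow, pow_le_pow_iff_left₀ (by positivity) (norm_nonneg s) two_ne_zero] at hlam
  have hs1 : 1 ≤ ‖s‖ := by nlinarith [mul_nonneg hQ0 ha₁.le]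
  have hq0 : (q 0 : ℂ) ≠ s ^ 2 := fun h0 => by
    have := hQc 0 (left_mem_Icc.2 ha₁.le)
    rw [h0, norm_pow] at this
    nlinarith
  have hvol := eq_volterra_of_ode ha₁ (norm_pos_iff.1 (by linarith)) (hφsmooth lam)
    (continuous_ofReal.comp_continuousOn hq) (fun t ht => by rw [hss]; exact hφode lam t ht)
    hq0 (hφ0 lam) (hφ'0 lam)
  calc _ ≤ 2 * (1 + ‖(h : ℂ)‖) * Q * a₁ / ‖s‖ * Real.exp (|s.im| * t) :=
        norm_sub_cos_add_div_mul_sin_le_of_eq_volterra ha₁.le (hφsmooth lam).continuousOn hQc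
          hs1 (by linarith) hvol t ht
    _ ≤ _ := by rw [norm_real, Real.norm_eq_abs]; gcongr; linarith
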